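/- arXiv:1409.6991 — 8 statements merged into one kernel-verified Lean document; each statement's English description precedes it below -/
import Mathlib

section
/- Weak triangular inequality: Let γ : ℝ≥0 → ℝ≥0 be of class K and ρ : ℝ≥0 → ℝ≥0 be of class K∞. Then for all nonnegative real numbers a and b, γ(a + b) ≤ γ(a + ρ(a)) + γ(b + ρ⁻¹(b)), where ρ⁻¹ denotes the inverse bijection of ρ. -/
open scoped NNReal

/-- A function `γ : ℝ≥0 → ℝ≥0` is of class K if it is continuous, strictly
increasing, and `γ 0 = 0`. -/
def ClassK (γ : ℝ≥0 → ℝ≥0) : Prop := Continuous γ ∧ StrictMono γ ∧ γ 0 = 0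

/-- A function `ρ : ℝ≥0 → ℝ≥0` is of class K∞ if it is of class K and unbounded. -/
def ClassKInf (ρ : ℝ≥0 → ℝ≥0) : Prop :=
  ClassK ρ ∧ Filter.Tendsto ρ Filter.atTop Filter.atTop

/-- Weak triangular inequality: for `γ` of class K and `ρ` of class K∞ with
inverse bijection `ρinv`, `γ(a+b) ≤ γ(a + ρ(a)) + γ(b + ρ⁻¹(b))`. -/
theorem weak_triangular_inequality
    (γ ρ ρinv : ℝ≥0 → ℝ≥0)
    (hγ : ClassK γ) (hρ : ClassKInf ρ)
    (hinvl : Function.LeftInverse ρinv ρ)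
    (hinvr : Function.RightInverse ρinv ρ)
    (a b : ℝ≥0) :
    γ (a + b) ≤ γ (a + ρ a) + γ (b + ρinv b) := by
  obtain ⟨hc, hsm, h0⟩ := hγ
  obtain ⟨⟨_, hρsm, _⟩, _⟩ := hρ
  rcases le_or_gt b (ρ a) with h | h
  · calc γ (a + b) ≤ γ (a + ρ a) := hsm.monotone (by gcongr)
      _ ≤ _ := le_self_add
  · have ha : a ≤ ρinv b := by
      rw [← hρsm.le_iff_le, hinvr]
      exact h.le
    calc γ (a + b) ≤ γ (b + ρinv b) := hsm.monotone (by rw [add_comm]; gcongr)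
      _ ≤ _ := le_add_self
end

section
/- Let ρ : ℝ≥0 → ℝ≥0 be of class K∞ and let Id denote the identity on ℝ≥0. Then the function φ : ℝ≥0 → ℝ≥0 defined by φ(s) = s − (Id + ρ)⁻¹(s) is of class K∞, and its inverse is Id + ρ⁻¹; that is, φ(s + ρ⁻¹(s)) = s and (Id + ρ⁻¹)(φ(s)) = s for all s ≥ 0. -/
open scoped NNReal

/-- For `ρ` of class K∞, with `ρinv` the inverse bijection of `ρ` and `σ` the
inverse bijection of `Id + ρ`, the function `φ(s) = s - (Id + ρ)⁻¹(s)` is of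
class K∞ and its inverse is `Id + ρ⁻¹`: `φ(s + ρ⁻¹(s)) = s` and
`(Id + ρ⁻¹)(φ(s)) = s` for all `s`. -/
theorem sub_inv_id_add_classKInf
    (ρ ρinv σ : ℝ≥0 → ℝ≥0)
    (hρ : ClassKInf ρ)
    (hρinvl : Function.LeftInverse ρinv ρ)
    (hρinvr : Function.RightInverse ρinv ρ)
    (hσl : Function.LeftInverse σ (fun s => s + ρ s))
    (hσr : Function.RightInverse σ (fun s => s + ρ s)) :
    ClassKInf (fun s => s - σ s) ∧
      (∀ s : ℝ≥0, (s + ρinv s) - σ (s + ρinv s) = s) ∧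
      (∀ s : ℝ≥0, (s - σ s) + ρinv (s - σ s) = s) := by
  obtain ⟨⟨hρc, hρm, hρ0⟩, hρtop⟩ := hρ
  set g : ℝ≥0 → ℝ≥0 := fun s => s + ρ s with hg
  have hgm : StrictMono g := fun a b h => add_lt_add h (hρm h)
  have hgsurj : Function.Surjective g := hσr.surjective
  have hσm : StrictMono σ := by
    intro a b h
    have := hgm.lt_iff_lt (a := σ a) (b := σ b)
    rw [hσr a, hσr b] at this
    exact this.mp h
  -- key: s - σ s = ρ (σ s)
  have key : ∀ s, s - σ s = ρ (σ s) := by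
    intro s
    exact tsub_eq_of_eq_add_rev (hσr s).symm
  have hσ0 : σ 0 = 0 := by
    have : g 0 = 0 := by simp [hg, hρ0]
    have := hσl 0
    simpa [hg, hρ0] using this
  -- continuity of σ via order iso
  have hσcont : Continuous σ := by
    let e := StrictMono.orderIsoOfSurjective g hgm hgsurj
    have hσe : σ = e.symm := by
      funext s
      apply hgm.injective
      rw [hσr s]
      exact (e.apply_symm_apply s).symm
    rw [hσe]
    exact OrderIso.continuous e.symm
  have hσtop : Filter.Tendsto σ Filter.atTop Filter.atTop :=
    hσm.monotone.tendsto_atTop_atTop fun b => ⟨g b, by rw [hσl b]⟩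
  have hφeq : (fun s => s - σ s) = ρ ∘ σ := by
    funext s; exact key s
  refine ⟨⟨⟨?_, ?_, ?_⟩, ?_⟩, ?_, ?_⟩
  · rw [hφeq]; exact hρc.comp hσcont
  · rw [hφeq]; exact hρm.comp hσm
  · simp [hσ0, hρ0]
  · rw [hφeq]; exact hρtop.comp hσtop
  · intro s
    have h1 : σ (s + ρinv s) = ρinv s := by
      have : g (ρinv s) = s + ρinv s := by
        simp [hg, hρinvr s, add_comm]
      rw [← this, hσl]
    rw [key, h1, hρinvr]
  · intro s
    rw [key, hρinvl, add_comm]; exact hσr s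
end

section
/- Let γ₁, γ₂ : ℝ≥0 → ℝ≥0 be of class K, let ρ₁, ρ₂ : ℝ≥0 → ℝ≥0 be of class K∞, and let s_l ≥ 0 be such that (Id + ρ₂)(γ₂((Id + ρ₁)(γ₁(s)))) ≤ s and (Id + ρ₁)(γ₁((Id + ρ₂)(γ₂(s)))) ≤ s for all s ≥ s_l. Then there exists a nonnegative real number d₃ such that for all s ≥ 0, γ₂((Id + ρ₁)(γ₁(s))) ≤ (Id + ρ₂)⁻¹(s) + d₃ and γ₁((Id + ρ₂)(γ₂(s))) ≤ (Id + ρ₁)⁻¹(s) + d₃; moreover, when s_l = 0 one may take d₃ = 0. -/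
open scoped NNReal

/-- If the small-gain conditions
`(Id+ρ₂)∘γ₂∘(Id+ρ₁)∘γ₁ ≤ Id` and `(Id+ρ₁)∘γ₁∘(Id+ρ₂)∘γ₂ ≤ Id` hold for all
`s ≥ s_l`, then there is `d₃ ≥ 0` (with `d₃ = 0` when `s_l = 0`) such that
`γ₂∘(Id+ρ₁)∘γ₁ ≤ (Id+ρ₂)⁻¹ + d₃` and `γ₁∘(Id+ρ₂)∘γ₂ ≤ (Id+ρ₁)⁻¹ + d₃`
everywhere. Here `σᵢ` denotes the inverse bijection of `Id + ρᵢ`. -/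
theorem small_gain_exists_d3
    (γ₁ γ₂ ρ₁ ρ₂ σ₁ σ₂ : ℝ≥0 → ℝ≥0)
    (hγ₁ : ClassK γ₁) (hγ₂ : ClassK γ₂)
    (hρ₁ : ClassKInf ρ₁) (hρ₂ : ClassKInf ρ₂)
    (hσ₁l : Function.LeftInverse σ₁ (fun s => s + ρ₁ s))
    (hσ₁r : Function.RightInverse σ₁ (fun s => s + ρ₁ s))
    (hσ₂l : Function.LeftInverse σ₂ (fun s => s + ρ₂ s))
    (hσ₂r : Function.RightInverse σ₂ (fun s => s + ρ₂ s))
    (s_l : ℝ≥0)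
    (hsg₁ : ∀ s : ℝ≥0, s_l ≤ s →
      γ₂ (γ₁ s + ρ₁ (γ₁ s)) + ρ₂ (γ₂ (γ₁ s + ρ₁ (γ₁ s))) ≤ s)
    (hsg₂ : ∀ s : ℝ≥0, s_l ≤ s →
      γ₁ (γ₂ s + ρ₂ (γ₂ s)) + ρ₁ (γ₁ (γ₂ s + ρ₂ (γ₂ s))) ≤ s) :
    ∃ d₃ : ℝ≥0,
      (∀ s : ℝ≥0, γ₂ (γ₁ s + ρ₁ (γ₁ s)) ≤ σ₂ s + d₃ ∧
        γ₁ (γ₂ s + ρ₂ (γ₂ s)) ≤ σ₁ s + d₃) ∧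
      (s_l = 0 → d₃ = 0) := by
  obtain ⟨-, hγ₁m, hγ₁0⟩ := hγ₁
  obtain ⟨-, hγ₂m, hγ₂0⟩ := hγ₂
  obtain ⟨⟨-, hρ₁m, hρ₁0⟩, -⟩ := hρ₁
  obtain ⟨⟨-, hρ₂m, hρ₂0⟩, -⟩ := hρ₂
  have hf₁ : StrictMono (fun s => s + ρ₁ s) := fun a b h => add_lt_add h (hρ₁m h)
  have hf₂ : StrictMono (fun s => s + ρ₂ s) := fun a b h => add_lt_add h (hρ₂m h)
  have hσ₁mono : Monotone σ₁ := fun a b hab => by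
    by_contra h
    push_neg at h
    have := hf₁ h
    rw [hσ₁r a, hσ₁r b] at this
    exact absurd hab (not_le.mpr this)
  have hσ₂mono : Monotone σ₂ := fun a b hab => by
    by_contra h
    push_neg at h
    have := hf₂ h
    rw [hσ₂r a, hσ₂r b] at this
    exact absurd hab (not_le.mpr this)
  refine ⟨γ₂ (γ₁ s_l + ρ₁ (γ₁ s_l)) ⊔ γ₁ (γ₂ s_l + ρ₂ (γ₂ s_l)), fun s => ?_, fun h => ?_⟩
  · constructor
    · rcases le_or_gt s_l s with hs | hs
      · have h1 := hsg₁ s hs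
        set t := γ₂ (γ₁ s + ρ₁ (γ₁ s)) with ht
        have : σ₂ (t + ρ₂ t) ≤ σ₂ s := hσ₂mono h1
        rw [hσ₂l t] at this
        exact le_add_right this
      · have : γ₂ (γ₁ s + ρ₁ (γ₁ s)) ≤ γ₂ (γ₁ s_l + ρ₁ (γ₁ s_l)) := by
          apply hγ₂m.monotone
          have h1 : γ₁ s ≤ γ₁ s_l := hγ₁m.monotone hs.le
          exact add_le_add h1 (hρ₁m.monotone h1)
        exact le_add_left (this.trans le_sup_left)
    · rcases le_or_gt s_l s with hs | hs
      · have h1 := hsg₂ s hs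
        set t := γ₁ (γ₂ s + ρ₂ (γ₂ s)) with ht
        have : σ₁ (t + ρ₁ t) ≤ σ₁ s := hσ₁mono h1
        rw [hσ₁l t] at this
        exact le_add_right this
      · have : γ₁ (γ₂ s + ρ₂ (γ₂ s)) ≤ γ₁ (γ₂ s_l + ρ₂ (γ₂ s_l)) := by
          apply hγ₁m.monotone
          have h1 : γ₂ s ≤ γ₂ s_l := hγ₂m.monotone hs.le
          exact add_le_add h1 (hρ₂m.monotone h1)
        exact le_add_left (this.trans le_sup_right)
  · subst h
    simp [hγ₁0, hγ₂0, hρ₁0, hρ₂0]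
end

section
/- Step-1 uniform output bound: Let T ∈ (0, ∞], let y₁, y₂ : [0, T) → ℝ≥0 be bounded on every compact subinterval [0, t], and let γ₁, γ₂ be of class K, ρ₁, ρ₂ of class K∞, and b₁, b₂, v₁, v₂, d₁, d₂, d₃ ≥ 0 be constants such that: (i) y₁(t) ≤ b₁ + γ₁(sup_{s ∈ [0,t]} y₂(s)) + v₁ + d₁ and y₂(t) ≤ b₂ + γ₂(sup_{s ∈ [0,t]} y₁(s)) + v₂ + d₂ for all t ∈ [0, T); and (ii) γ₂((Id + ρ₁)(γ₁(s))) ≤ (Id + ρ₂)⁻¹(s) + d₃ for all s ≥ 0. Then for all t ∈ [0, T), y₂(t) ≤ (Id + ρ₂⁻¹)(b₂ + d₃ + γ₂((Id + ρ₁⁻¹)(b₁ + v₁ + d₁)) + v₂ + d₂). In particular y₂ is bounded on [0, T) by a constant independent of T. -/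
/-!
Let `s` be the running supremum of `y₂` up to `t`, `B = b₁ + v₁ + d₁`, and `C` the constant to
which `Id + ρ₂⁻¹` is applied in the claim. Feeding the bound on `y₁` into the bound on `y₂` and
splitting `γ₂ (γ₁ s + B) ≤ γ₂ ((Id + ρ₁) (γ₁ s)) + γ₂ ((Id + ρ₁⁻¹) B)`, the small-gain condition
turns the estimate into `s ≤ C + (Id + ρ₂)⁻¹ s`. Writing `s = u + ρ₂ u`, this says `ρ₂ u ≤ C`,
hence `s ≤ C + ρ₂⁻¹ C`.
-/

open scoped NNReal ENNReal

open Set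

theorem Monotone.map_add_le_weak_triangle {α β : Type*}
    [AddCommMonoid α] [LinearOrder α] [IsOrderedAddMonoid α]
    [AddCommMonoid β] [PartialOrder β] [CanonicallyOrderedAdd β]
    {γ : α → β} {ρ ρinv : α → α} (hγ : Monotone γ) (hρ : StrictMono ρ)
    (hρinv : Function.RightInverse ρinv ρ) (a b : α) :
    γ (a + b) ≤ γ (a + ρ a) + γ (b + ρinv b) := by
  rcases le_total b (ρ a) with hb | hb
  · exact le_add_right (hγ (by gcongr))
  · have ha : a ≤ ρinv b := hρ.le_iff_le.mp (hb.trans_eq (hρinv b).symm)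
    exact le_add_left (hγ (by rw [add_comm]; gcongr))

theorem le_add_inv_of_le_add_inv_id_add {α : Type*}
    [AddCommMonoid α] [LinearOrder α] [IsOrderedCancelAddMonoid α]
    {ρ ρinv σ : α → α} (hρ : StrictMono ρ) (hρinv : Function.RightInverse ρinv ρ)
    (hσ : Function.RightInverse σ (fun s => s + ρ s)) {m C : α} (hm : m ≤ C + σ m) :
    m ≤ C + ρinv C := by
  set u := σ m
  have hmu : u + ρ u = m := hσ m
  have hρu : ρ u ≤ C := by
    rw [← hmu, add_comm C] at hm
    exact le_of_add_le_add_left hm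
  have hu : u ≤ ρinv C := hρ.le_iff_le.mp (hρu.trans_eq (hρinv C).symm)
  calc m = u + ρ u := hmu.symm
    _ ≤ ρinv C + C := add_le_add hu hρu
    _ = C + ρinv C := add_comm _ _

theorem csSup_image_Icc_le_of_le_map_csSup {α β δ : Type*} [Preorder α]
    [ConditionallyCompleteLattice β] [ConditionallyCompleteLattice δ]
    {y : α → β} {z : α → δ} {F : δ → β} {a t : α} (hat : a ≤ t) (hF : Monotone F)
    (hz : BddAbove (z '' Icc a t)) (hy : ∀ u ∈ Icc a t, y u ≤ F (sSup (z '' Icc a u))) :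
    sSup (y '' Icc a t) ≤ F (sSup (z '' Icc a t)) := by
  refine csSup_le ((nonempty_Icc.mpr hat).image y) ?_
  rintro _ ⟨u, hu, rfl⟩
  exact (hy u hu).trans (hF (csSup_le_csSup hz ((nonempty_Icc.mpr hu.1).image z)
    (image_mono (Icc_subset_Icc_right hu.2))))

theorem step1_uniform_output_bound_general
    (T : ℝ≥0∞)
    (y₁ y₂ : ℝ≥0 → ℝ≥0)
    (γ₁ γ₂ ρ₁ ρ₂ ρ₁inv ρ₂inv σ₂ : ℝ≥0 → ℝ≥0)
    (b₁ b₂ v₁ v₂ d₁ d₂ d₃ : ℝ≥0)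
    (hγ₁ : ClassK γ₁) (hγ₂ : ClassK γ₂)
    (hρ₁ : ClassKInf ρ₁) (hρ₂ : ClassKInf ρ₂)
    (hρ₁invr : Function.RightInverse ρ₁inv ρ₁)
    (hρ₂invr : Function.RightInverse ρ₂inv ρ₂)
    (hσ₂r : Function.RightInverse σ₂ (fun s => s + ρ₂ s))
    (hbdd : ∀ t : ℝ≥0, (t : ℝ≥0∞) < T →
      BddAbove (y₁ '' Set.Icc 0 t) ∧ BddAbove (y₂ '' Set.Icc 0 t))
    (hy₁ : ∀ t : ℝ≥0, (t : ℝ≥0∞) < T →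
      y₁ t ≤ b₁ + γ₁ (sSup (y₂ '' Set.Icc 0 t)) + v₁ + d₁)
    (hy₂ : ∀ t : ℝ≥0, (t : ℝ≥0∞) < T →
      y₂ t ≤ b₂ + γ₂ (sSup (y₁ '' Set.Icc 0 t)) + v₂ + d₂)
    (hsg : ∀ s : ℝ≥0, γ₂ (γ₁ s + ρ₁ (γ₁ s)) ≤ σ₂ s + d₃) :
    ∀ t : ℝ≥0, (t : ℝ≥0∞) < T →
      y₂ t ≤
        (b₂ + d₃ + γ₂ ((b₁ + v₁ + d₁) + ρ₁inv (b₁ + v₁ + d₁)) + v₂ + d₂) +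
          ρ₂inv (b₂ + d₃ + γ₂ ((b₁ + v₁ + d₁) + ρ₁inv (b₁ + v₁ + d₁)) + v₂ + d₂) := by
  intro t ht
  set B := b₁ + v₁ + d₁
  set C := b₂ + d₃ + γ₂ (B + ρ₁inv B) + v₂ + d₂
  have hσ₂ : Monotone σ₂ :=
    ((strictMono_id.add hρ₂.1.2.1).orderIsoOfRightInverse _ σ₂ hσ₂r).symm.monotone
  have hbefore : ∀ u ∈ Icc 0 t, (u : ℝ≥0∞) < T := fun u hu =>
    lt_of_le_of_lt (ENNReal.coe_le_coe.mpr hu.2) ht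
  have hy₂u : ∀ u ∈ Icc 0 t, y₂ u ≤ C + σ₂ (sSup (y₂ '' Icc 0 u)) := by
    intro u hu
    set s := sSup (y₂ '' Icc 0 u)
    have hM₁ : sSup (y₁ '' Icc 0 u) ≤ B + γ₁ s := by
      refine csSup_image_Icc_le_of_le_map_csSup (F := fun x => B + γ₁ x) hu.1
        (monotone_const.add hγ₁.2.1.monotone) (hbdd u (hbefore u hu)).2 fun w hw => ?_
      calc y₁ w ≤ b₁ + γ₁ (sSup (y₂ '' Icc 0 w)) + v₁ + d₁ :=
            hy₁ w (hbefore w ⟨hw.1, hw.2.trans hu.2⟩)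
        _ = B + γ₁ (sSup (y₂ '' Icc 0 w)) := by ring
    have hsplit := hγ₂.2.1.monotone.map_add_le_weak_triangle hρ₁.1.2.1 hρ₁invr (γ₁ s) B
    calc y₂ u ≤ b₂ + γ₂ (sSup (y₁ '' Icc 0 u)) + v₂ + d₂ := hy₂ u (hbefore u hu)
      _ ≤ b₂ + γ₂ (γ₁ s + B) + v₂ + d₂ := by
        gcongr; exact hγ₂.2.1.monotone (by rw [add_comm]; exact hM₁)
      _ ≤ b₂ + (σ₂ s + d₃ + γ₂ (B + ρ₁inv B)) + v₂ + d₂ := by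
        gcongr; exact hsplit.trans (by gcongr; exact hsg s)
      _ = C + σ₂ s := by ring
  have hsup : sSup (y₂ '' Icc 0 t) ≤ C + σ₂ (sSup (y₂ '' Icc 0 t)) :=
    csSup_image_Icc_le_of_le_map_csSup (F := fun x => C + σ₂ x) zero_le
      (monotone_const.add hσ₂) (hbdd t ht).2 hy₂u
  exact (le_csSup (hbdd t ht).2 ⟨t, ⟨zero_le, le_rfl⟩, rfl⟩).trans
    (le_add_inv_of_le_add_inv_id_add hρ₂.1.2.1 hρ₂invr hσ₂r hsup)

/-- Step-1 uniform output bound.  The trajectories `y₁, y₂` are viewed as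
functions on `ℝ≥0`, constrained only on `[0, T)` with `T ∈ (0, ∞]`; `σ₂`
denotes the inverse bijection of `Id + ρ₂` and `ρᵢinv` that of `ρᵢ`. -/
theorem step1_uniform_output_bound
    (T : ℝ≥0∞) (hT : 0 < T)
    (y₁ y₂ : ℝ≥0 → ℝ≥0)
    (γ₁ γ₂ ρ₁ ρ₂ ρ₁inv ρ₂inv σ₂ : ℝ≥0 → ℝ≥0)
    (b₁ b₂ v₁ v₂ d₁ d₂ d₃ : ℝ≥0)
    (hγ₁ : ClassK γ₁) (hγ₂ : ClassK γ₂)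
    (hρ₁ : ClassKInf ρ₁) (hρ₂ : ClassKInf ρ₂)
    (hρ₁invl : Function.LeftInverse ρ₁inv ρ₁)
    (hρ₁invr : Function.RightInverse ρ₁inv ρ₁)
    (hρ₂invl : Function.LeftInverse ρ₂inv ρ₂)
    (hρ₂invr : Function.RightInverse ρ₂inv ρ₂)
    (hσ₂l : Function.LeftInverse σ₂ (fun s => s + ρ₂ s))
    (hσ₂r : Function.RightInverse σ₂ (fun s => s + ρ₂ s))
    (hbdd : ∀ t : ℝ≥0, (t : ℝ≥0∞) < T →
      BddAbove (y₁ '' Set.Icc 0 t) ∧ BddAbove (y₂ '' Set.Icc 0 t))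
    (hy₁ : ∀ t : ℝ≥0, (t : ℝ≥0∞) < T →
      y₁ t ≤ b₁ + γ₁ (sSup (y₂ '' Set.Icc 0 t)) + v₁ + d₁)
    (hy₂ : ∀ t : ℝ≥0, (t : ℝ≥0∞) < T →
      y₂ t ≤ b₂ + γ₂ (sSup (y₁ '' Set.Icc 0 t)) + v₂ + d₂)
    (hsg : ∀ s : ℝ≥0, γ₂ (γ₁ s + ρ₁ (γ₁ s)) ≤ σ₂ s + d₃) :
    ∀ t : ℝ≥0, (t : ℝ≥0∞) < T →
      y₂ t ≤
        (b₂ + d₃ + γ₂ ((b₁ + v₁ + d₁) + ρ₁inv (b₁ + v₁ + d₁)) + v₂ + d₂) +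
          ρ₂inv (b₂ + d₃ + γ₂ ((b₁ + v₁ + d₁) + ρ₁inv (b₁ + v₁ + d₁)) + v₂ + d₂) :=
  step1_uniform_output_bound_general T y₁ y₂ γ₁ γ₂ ρ₁ ρ₂ ρ₁inv ρ₂inv σ₂ b₁ b₂ v₁ v₂ d₁ d₂ d₃ hγ₁ hγ₂
    hρ₁ hρ₂ hρ₁invr hρ₂invr hσ₂r hbdd hy₁ hy₂ hsg
end

section
/- Splitting of the uniform output bound: Let γ₂ be of class K, ρ₁, ρ₂, ρ₃ of class K∞, and b₁, b₂, v₁, v₂, d₁, d₂, d₃ ≥ 0. Then (Id + ρ₂⁻¹)(b₂ + d₃ + γ₂((Id + ρ₁⁻¹)(b₁ + v₁ + d₁)) + v₂ + d₂) ≤ (Id + ρ₂⁻¹)((Id + ρ₃⁻¹)(b₂ + γ₂((Id + ρ₁⁻¹)((Id + ρ₃⁻¹)(b₁))))) + (Id + ρ₂⁻¹)((Id + ρ₃)(d₃ + γ₂((Id + ρ₁⁻¹)((Id + ρ₃)(v₁ + d₁))) + v₂ + d₂)). In other words, the Step-1 bound splits into a term δ₂(·) depending only on the initial-condition constants b₁,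 b₂ and a term Δ₂ depending only on the input constants v₁, v₂, d₁, d₂, d₃. -/
open scoped NNReal

/-- `Ip ρ` is the pointwise sum `Id + ρ`. -/
def Ip (ρ : ℝ≥0 → ℝ≥0) : ℝ≥0 → ℝ≥0 := fun s => s + ρ s

/-!
The weak triangle inequality `a + b ≤ max ((Id + ρ⁻¹) a) ((Id + ρ) b)` holds because either
`b ≤ ρ⁻¹ a`, or `a ≤ ρ b`. Through a monotone map the maximum is bounded by the sum, so
`g (a + b) ≤ g ((Id + ρ⁻¹) a) + g ((Id + ρ) b)`. Applying this once inside `γ₂ ∘ (Id + ρ₁⁻¹)`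
with `ρ₃` separates `b₁` from `v₁ + d₁`, and once inside `Id + ρ₂⁻¹` with `ρ₃` separates the
initial-condition terms from the input terms.
-/

lemma StrictMono.monotone_of_rightInverse {α β : Type*} [LinearOrder α] [Preorder β]
    {f : α → β} {g : β → α} (hf : StrictMono f) (hg : Function.RightInverse g f) :
    Monotone g :=
  (hf.orderIsoOfRightInverse f g hg).symm.monotone

lemma Monotone.map_le_add_of_le_max {α β : Type*} [LinearOrder α] [AddCommMonoid β]
    [LinearOrder β] [CanonicallyOrderedAdd β] {f : α → β} (hf : Monotone f) {x a b : α}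
    (h : x ≤ max a b) : f x ≤ f a + f b :=
  calc f x ≤ f (max a b) := hf h
    _ = max (f a) (f b) := hf.map_max
    _ ≤ f a + f b := max_le le_self_add le_add_self

lemma monotone_Ip {ρ : ℝ≥0 → ℝ≥0} (hρ : Monotone ρ) : Monotone (Ip ρ) :=
  fun _ _ hab => add_le_add hab (hρ hab)

lemma add_le_max_Ip {ρ ρinv : ℝ≥0 → ℝ≥0} (hρ : Monotone ρ)
    (hinv : Function.RightInverse ρinv ρ) (a b : ℝ≥0) :
    a + b ≤ max (Ip ρinv a) (Ip ρ b) := by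
  rcases le_total b (ρinv a) with hb | hb
  · exact le_max_of_le_left (add_le_add_right hb a)
  · have ha : a ≤ ρ b := hinv a ▸ hρ hb
    exact le_max_of_le_right ((add_le_add_left ha b).trans_eq (add_comm _ _))

lemma Monotone.map_add_le_map_Ip_add_map_Ip {g ρ ρinv : ℝ≥0 → ℝ≥0} (hg : Monotone g)
    (hρ : Monotone ρ) (hinv : Function.RightInverse ρinv ρ) (a b : ℝ≥0) :
    g (a + b) ≤ g (Ip ρinv a) + g (Ip ρ b) :=
  hg.map_le_add_of_le_max (add_le_max_Ip hρ hinv a b)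

theorem split_uniform_output_bound_general
    (γ₂ ρ₁ ρ₂ ρ₃ ρ₁inv ρ₂inv ρ₃inv : ℝ≥0 → ℝ≥0)
    (hγ₂ : ClassK γ₂)
    (hρ₁ : ClassKInf ρ₁) (hρ₂ : ClassKInf ρ₂) (hρ₃ : ClassKInf ρ₃)
    (hρ₁invr : Function.RightInverse ρ₁inv ρ₁)
    (hρ₂invr : Function.RightInverse ρ₂inv ρ₂)
    (hρ₃invr : Function.RightInverse ρ₃inv ρ₃)
    (b₁ b₂ v₁ v₂ d₁ d₂ d₃ : ℝ≥0) :
    Ip ρ₂inv (b₂ + d₃ + γ₂ (Ip ρ₁inv (b₁ + v₁ + d₁)) + v₂ + d₂) ≤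
      Ip ρ₂inv (Ip ρ₃inv (b₂ + γ₂ (Ip ρ₁inv (Ip ρ₃inv b₁)))) +
        Ip ρ₂inv (Ip ρ₃ (d₃ + γ₂ (Ip ρ₁inv (Ip ρ₃ (v₁ + d₁))) + v₂ + d₂)) := by
  have hρ₃mono : Monotone ρ₃ := hρ₃.1.2.1.monotone
  have hIp₁ : Monotone (Ip ρ₁inv) := monotone_Ip (hρ₁.1.2.1.monotone_of_rightInverse hρ₁invr)
  have hIp₂ : Monotone (Ip ρ₂inv) := monotone_Ip (hρ₂.1.2.1.monotone_of_rightInverse hρ₂invr)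
  have split_state := (hγ₂.2.1.monotone.comp hIp₁).map_add_le_map_Ip_add_map_Ip
    hρ₃mono hρ₃invr b₁ (v₁ + d₁)
  have split_output : b₂ + d₃ + γ₂ (Ip ρ₁inv (b₁ + v₁ + d₁)) + v₂ + d₂ ≤
      (b₂ + γ₂ (Ip ρ₁inv (Ip ρ₃inv b₁))) + (d₃ + γ₂ (Ip ρ₁inv (Ip ρ₃ (v₁ + d₁))) + v₂ + d₂) :=
    calc _ = b₂ + d₃ + γ₂ (Ip ρ₁inv (b₁ + (v₁ + d₁))) + v₂ + d₂ := by rw [add_assoc b₁]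
      _ ≤ b₂ + d₃ + (γ₂ (Ip ρ₁inv (Ip ρ₃inv b₁)) + γ₂ (Ip ρ₁inv (Ip ρ₃ (v₁ + d₁)))) + v₂ + d₂ := by
          gcongr; exact split_state
      _ = _ := by ring
  exact (hIp₂ split_output).trans (hIp₂.map_add_le_map_Ip_add_map_Ip hρ₃mono hρ₃invr _ _)

/-- Splitting of the Step-1 uniform output bound into an initial-condition term
and an input term.  Here `ρᵢinv` denotes the inverse bijection of `ρᵢ`. -/
theorem split_uniform_output_bound
    (γ₂ ρ₁ ρ₂ ρ₃ ρ₁inv ρ₂inv ρ₃inv : ℝ≥0 → ℝ≥0)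
    (hγ₂ : ClassK γ₂)
    (hρ₁ : ClassKInf ρ₁) (hρ₂ : ClassKInf ρ₂) (hρ₃ : ClassKInf ρ₃)
    (hρ₁invl : Function.LeftInverse ρ₁inv ρ₁)
    (hρ₁invr : Function.RightInverse ρ₁inv ρ₁)
    (hρ₂invl : Function.LeftInverse ρ₂inv ρ₂)
    (hρ₂invr : Function.RightInverse ρ₂inv ρ₂)
    (hρ₃invl : Function.LeftInverse ρ₃inv ρ₃)
    (hρ₃invr : Function.RightInverse ρ₃inv ρ₃)
    (b₁ b₂ v₁ v₂ d₁ d₂ d₃ : ℝ≥0) :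
    Ip ρ₂inv (b₂ + d₃ + γ₂ (Ip ρ₁inv (b₁ + v₁ + d₁)) + v₂ + d₂) ≤
      Ip ρ₂inv (Ip ρ₃inv (b₂ + γ₂ (Ip ρ₁inv (Ip ρ₃inv b₁)))) +
        Ip ρ₂inv (Ip ρ₃ (d₃ + γ₂ (Ip ρ₁inv (Ip ρ₃ (v₁ + d₁))) + v₂ + d₂)) :=
  split_uniform_output_bound_general γ₂ ρ₁ ρ₂ ρ₃ ρ₁inv ρ₂inv ρ₃inv hγ₂ hρ₁ hρ₂ hρ₃ hρ₁invr hρ₂invr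
    hρ₃invr b₁ b₂ v₁ v₂ d₁ d₂ d₃
end

section
/- Gain-assignment choice of α: Let δ₁ and r be of class K∞ and let g be of class K. Define α = (Id + δ₁)⁻¹ ∘ r ∘ (Id + g)⁻¹. Then α is of class K∞ and δ₁(α(g(s))) ≤ r(s) for all s ≥ 0. -/
open scoped NNReal

lemma inv_props (f e : ℝ≥0 → ℝ≥0) (hf : StrictMono f)
    (hl : Function.LeftInverse e f) (hr : Function.RightInverse e f) :
    StrictMono e ∧ Continuous e ∧ Filter.Tendsto e Filter.atTop Filter.atTop := by
  have hsurj : Function.Surjective f := fun x => ⟨e x, hr x⟩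
  have hmono : StrictMono e := fun a b h => by
    rw [← hf.lt_iff_lt, hr, hr]; exact h
  refine ⟨hmono, ?_, ?_⟩
  · obtain ⟨iso, hiso⟩ : ∃ iso : ℝ≥0 ≃o ℝ≥0, ∀ x, iso x = f x :=
      ⟨StrictMono.orderIsoOfSurjective f hf hsurj,
        fun x => congrFun (StrictMono.coe_orderIsoOfSurjective f hf hsurj) x⟩
    have : e = ⇑iso.symm := by
      funext x
      apply hf.injective
      rw [hr]
      rw [← hiso]
      exact (OrderIso.apply_symm_apply _ x).symm
    rw [this]
    exact iso.symm.toHomeomorph.continuous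
  · refine Filter.tendsto_atTop.mpr fun b => ?_
    filter_upwards [Filter.eventually_ge_atTop (f b)] with x hx
    have := hmono.monotone hx
    rwa [hl] at this

/-- Gain-assignment choice of `α`: with `e₁` the inverse bijection of `Id + δ₁`
and `e₂` the inverse bijection of `Id + g`, the function
`α = (Id + δ₁)⁻¹ ∘ r ∘ (Id + g)⁻¹` is of class K∞ and satisfies
`δ₁(α(g(s))) ≤ r(s)` for all `s`. -/
theorem gain_assignment_alpha
    (δ₁ r g e₁ e₂ : ℝ≥0 → ℝ≥0)
    (hδ₁ : ClassKInf δ₁) (hr : ClassKInf r) (hg : ClassK g)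
    (he₁l : Function.LeftInverse e₁ (fun s => s + δ₁ s))
    (he₁r : Function.RightInverse e₁ (fun s => s + δ₁ s))
    (he₂l : Function.LeftInverse e₂ (fun s => s + g s))
    (he₂r : Function.RightInverse e₂ (fun s => s + g s)) :
    ClassKInf (fun s => e₁ (r (e₂ s))) ∧
      ∀ s : ℝ≥0, δ₁ (e₁ (r (e₂ (g s)))) ≤ r s := by
  have hf₁ : StrictMono (fun s => s + δ₁ s) := fun a b h =>
    add_lt_add h (hδ₁.1.2.1 h)
  have hf₂ : StrictMono (fun s => s + g s) := fun a b h =>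
    add_lt_add h (hg.2.1 h)
  obtain ⟨h₁m, h₁c, h₁t⟩ := inv_props _ _ hf₁ he₁l he₁r
  obtain ⟨h₂m, h₂c, h₂t⟩ := inv_props _ _ hf₂ he₂l he₂r
  have he₁0 : e₁ 0 = 0 := by
    have := he₁l 0; simpa [hδ₁.1.2.2] using this
  have he₂0 : e₂ 0 = 0 := by
    have := he₂l 0; simpa [hg.2.2] using this
  constructor
  · refine ⟨⟨h₁c.comp (hr.1.1.comp h₂c), fun a b h => h₁m (hr.1.2.1 (h₂m h)), ?_⟩, ?_⟩
    · simp [he₂0, hr.1.2.2, he₁0]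
    · exact h₁t.comp (hr.2.comp h₂t)
  · intro s
    have h1 : e₂ (g s) ≤ s := by
      have : g s ≤ s + g s := le_add_self
      have := h₂m.monotone this
      rwa [he₂l] at this
    have h2 : r (e₂ (g s)) ≤ r s := hr.1.2.1.monotone h1
    have h3 : δ₁ (e₁ (r (e₂ (g s)))) ≤ r (e₂ (g s)) := by
      have := he₁r (r (e₂ (g s)))
      calc δ₁ (e₁ (r (e₂ (g s)))) ≤ e₁ (r (e₂ (g s))) + δ₁ (e₁ (r (e₂ (g s)))) := le_add_self
        _ = r (e₂ (g s)) := this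
    exact h3.trans h2
end

section
/- Asymptotic small-gain lemma: Let z : ℝ≥0 → ℝ≥0 be bounded, let β : ℝ≥0 → ℝ≥0 satisfy β(t) → 0 as t → ∞, let ρ₂ be of class K∞, and let c ≥ 0. Suppose that for all t, τ ≥ 0, z(t + τ) ≤ β(t) + (Id + ρ₂)⁻¹( sup_{s ≥ t/4 + τ} z(s) ) + c. Then limsup_{t → ∞} z(t) ≤ (Id + ρ₂⁻¹)(c) = c + ρ₂⁻¹(c). -/
open scoped NNReal Topology
open Filter Set

/-! Let `L` be the limsup of `z`. Once `τ` is so large that every tail supremum is below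
`L + ε`, the hypothesis bounds `z` eventually by `β t + σ₂ (L + ε) + c`; letting `t → ∞` and
then `ε → 0` gives `L ≤ σ₂ L + c`. Writing `y = σ₂ L`, i.e. `y + ρ₂ y = L`, this says
`ρ₂ y ≤ c`, hence `y ≤ ρ₂⁻¹ c` and `L = y + ρ₂ y ≤ ρ₂⁻¹ c + c`. -/

lemma tail_sSup_le_of_limsup_lt {z : ℝ≥0 → ℝ≥0} (hz : BddAbove (range z)) {b : ℝ≥0}
    (h : limsup z atTop < b) : ∃ u, ∀ τ, u ≤ τ → sSup (z '' Ici τ) ≤ b := by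
  obtain ⟨u, hu⟩ := eventually_atTop.mp (eventually_lt_of_limsup_lt h hz.isBoundedUnder_of_range)
  refine ⟨u, fun τ hτ => csSup_le (nonempty_Ici.image z) ?_⟩
  rintro _ ⟨s, hs, rfl⟩
  exact (hu s (hτ.trans hs)).le

lemma limsup_le_apply_limsup_of_le_add_tail_sSup {z β g : ℝ≥0 → ℝ≥0}
    (hz : BddAbove (range z)) (hβ : Tendsto β atTop (𝓝 0)) (hg_mono : Monotone g) (hg : Continuous g)
    (h : ∀ t τ, z (t + τ) ≤ β t + g (sSup (z '' Ici τ))) :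
    limsup z atTop ≤ g (limsup z atTop) := by
  set L := limsup z atTop
  have h_eps : ∀ ε > 0, L ≤ g (L + ε) := by
    intro ε hε
    obtain ⟨u, hu⟩ := tail_sSup_le_of_limsup_lt hz (lt_add_of_pos_right L hε)
    have hL : ∀ t, L ≤ β t + g (L + ε) := fun t => by
      refine limsup_le_of_le (h := eventually_atTop.mpr ⟨t + u, fun s hs => ?_⟩)
      have hts : t ≤ s := le_self_add.trans hs
      calc z s = z (t + (s - t)) := by rw [add_tsub_cancel_of_le hts]
        _ ≤ β t + g (sSup (z '' Ici (s - t))) := h t (s - t)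
        _ ≤ β t + g (L + ε) := by
          gcongr
          exact hg_mono (hu (s - t) (le_tsub_of_add_le_left hs))
    simpa using ge_of_tendsto' (hβ.add_const (g (L + ε))) hL
  have hg_right : Tendsto (fun ε => g (L + ε)) (𝓝[>] 0) (𝓝 (g L)) := by
    have := (hg.tendsto (L + 0)).comp
      ((tendsto_const_nhds.add tendsto_id).mono_left (nhdsWithin_le_nhds (s := Ioi 0)))
    rwa [add_zero] at this
  exact ge_of_tendsto hg_right (eventually_nhdsWithin_of_forall h_eps)

lemma le_add_inv_of_le_inv_id_add_add {α : Type*} [AddCommMonoid α] [LinearOrder α]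
    [IsOrderedCancelAddMonoid α] {ρ ρinv σ : α → α} (hρ : StrictMono ρ)
    (hρinv : Function.RightInverse ρinv ρ) (hσ : Function.RightInverse σ (fun s => s + ρ s))
    {L c : α} (h : L ≤ σ L + c) : L ≤ c + ρinv c := by
  set y := σ L
  have hL : y + ρ y = L := hσ L
  have hρy : ρ y ≤ c := le_of_add_le_add_left (hL.trans_le h)
  have hy : y ≤ ρinv c := hρ.le_iff_le.mp (hρy.trans_eq (hρinv c).symm)
  calc L = y + ρ y := hL.symm
    _ ≤ ρinv c + c := add_le_add hy hρy
    _ = c + ρinv c := add_comm _ _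

theorem asymptotic_small_gain_general
    (z β : ℝ≥0 → ℝ≥0) (ρ₂ ρ₂inv σ₂ : ℝ≥0 → ℝ≥0) (c : ℝ≥0)
    (hz : BddAbove (Set.range z))
    (hβ : Filter.Tendsto β Filter.atTop (nhds 0))
    (hρ₂ : ClassKInf ρ₂)
    (hρ₂invr : Function.RightInverse ρ₂inv ρ₂)
    (hσ₂r : Function.RightInverse σ₂ (fun s => s + ρ₂ s))
    (hineq : ∀ t τ : ℝ≥0,
      z (t + τ) ≤ β t + σ₂ (sSup (z '' Set.Ici (t / 4 + τ))) + c) :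
    Filter.limsup z Filter.atTop ≤ c + ρ₂inv c := by
  obtain ⟨⟨-, hρ_mono, -⟩, -⟩ := hρ₂
  let idAddρ : ℝ≥0 ≃o ℝ≥0 :=
    (strictMono_id.add hρ_mono).orderIsoOfRightInverse _ σ₂ hσ₂r
  have hσ_mono : Monotone σ₂ := idAddρ.symm.monotone
  have hσ_cont : Continuous σ₂ := idAddρ.symm.continuous
  refine le_add_inv_of_le_inv_id_add_add hρ_mono hρ₂invr hσ₂r
    (limsup_le_apply_limsup_of_le_add_tail_sSup hz hβ (hσ_mono.add_const c)
      (hσ_cont.add continuous_const) fun t τ => (hineq t τ).trans ?_)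
  rw [add_assoc]
  gcongr
  exact hσ_mono (csSup_le_csSup (hz.mono (image_subset_range _ _)) (nonempty_Ici.image z)
    (image_mono (Ici_subset_Ici.mpr le_add_self)))

/-- Asymptotic small-gain lemma: if `z` is bounded, `β(t) → 0`, `ρ₂` is of
class K∞ with inverse `ρ₂inv`, `σ₂` is the inverse bijection of `Id + ρ₂`, and
`z(t+τ) ≤ β(t) + (Id+ρ₂)⁻¹(sup_{s ≥ t/4+τ} z(s)) + c` for all `t, τ ≥ 0`, then
`limsup_{t→∞} z(t) ≤ c + ρ₂⁻¹(c)`. -/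
theorem asymptotic_small_gain
    (z β : ℝ≥0 → ℝ≥0) (ρ₂ ρ₂inv σ₂ : ℝ≥0 → ℝ≥0) (c : ℝ≥0)
    (hz : BddAbove (Set.range z))
    (hβ : Filter.Tendsto β Filter.atTop (nhds 0))
    (hρ₂ : ClassKInf ρ₂)
    (hρ₂invl : Function.LeftInverse ρ₂inv ρ₂)
    (hρ₂invr : Function.RightInverse ρ₂inv ρ₂)
    (hσ₂l : Function.LeftInverse σ₂ (fun s => s + ρ₂ s))
    (hσ₂r : Function.RightInverse σ₂ (fun s => s + ρ₂ s))
    (hineq : ∀ t τ : ℝ≥0,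
      z (t + τ) ≤ β t + σ₂ (sSup (z '' Set.Ici (t / 4 + τ))) + c) :
    Filter.limsup z Filter.atTop ≤ c + ρ₂inv c :=
  asymptotic_small_gain_general z β ρ₂ ρ₂inv σ₂ c hz hβ hρ₂ hρ₂invr hσ₂r hineq
end

section
/- Practical-stability part of the generalized small-gain theorem (trajectory form): Let β₁, β₂ be of class KL; γ₁ʸ, γ₂ʸ, γ₁ᵘ, γ₂ᵘ of class K; ρ₁, ρ₂, ρ₃ of class K∞; d₁, d₂, s_l ≥ 0; and suppose (Id + ρ₂)(γ₂ʸ((Id + ρ₁)(γ₁ʸ(s)))) ≤ s and (Id + ρ₁)(γ₁ʸ((Id + ρ₂)(γ₂ʸ(s)))) ≤ s for all s ≥ s_l. Let r₁(s) = (Id + ρ₁⁻¹)((Id + ρ₃)²(γ₁ᵘ(s) + γ₁ʸ((Id + ρ₂⁻¹)((Id + ρ₃)²(γ₂ᵘ(s)))))) and r₂(s) = (Id + ρ₂⁻¹)((Id + ρ₃)²(γ₂ᵘ(s) + γ₂ʸ((Id + ρ₁⁻¹)((Id + ρ₃)²(γ₁ᵘ(s)))))). Then there exist a constant d₃ ≥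 0 (with d₃ = 0 when s_l = 0), class-K-type functions δ₁, δ₂ of (X₁, X₂) built from β₁(·,0), β₂(·,0), γ₁ʸ, γ₂ʸ, ρ₁, ρ₂, ρ₃, and constants d̃₁, d̃₂ ≥ 0 depending only on d₁, d₂, d₃, γ₁ʸ, γ₂ʸ, ρ₁, ρ₂, ρ₃, with d̃₁ = d̃₂ = 0 when d₁ = d₂ = s_l = 0, such that for every T ∈ (0, ∞], all X₁, X₂, U₁, U₂ ≥ 0, and all y₁, y₂ : [0, T) → ℝ≥0 that are bounded on every compact subinterval and satisfy, for all t ∈ [0, T), y₁(t) ≤ β₁(X₁, 0) + γ₁ʸ(sup_{s ∈ [0,t]} y₂(s)) + γ₁ᵘ(U₁) + d₁ and y₂(t) ≤ β₂(X₂, 0) + γ₂ʸ(sup_{s ∈ [0,t]} y₁(s)) + γ₂ᵘ(U₂) + d₂, we have for every t ∈ [0, T): y₂(t) ≤ δ₂(X₁, X₂) + r₂(U₁ + U₂) + d̃₂ and y₁(t) ≤ δ₁(X₁, X₂) + r₁(U₁ + U₂) + d̃₁. -/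
open scoped NNReal ENNReal

/-- A function `β : ℝ≥0 × ℝ≥0 → ℝ≥0` is of class KL if `β (·, t)` is of class K
for each `t`, and `β (s, ·)` is non-increasing and tends to `0` at `∞`. -/
def ClassKL (β : ℝ≥0 → ℝ≥0 → ℝ≥0) : Prop :=
  (∀ t : ℝ≥0, ClassK (fun s => β s t)) ∧
    (∀ s : ℝ≥0, Antitone (fun t => β s t) ∧
      Filter.Tendsto (fun t => β s t) Filter.atTop (nhds 0))

namespace SGAux

lemma le_ip (f : ℝ≥0 → ℝ≥0) (x : ℝ≥0) : x ≤ Ip f x := le_self_add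

lemma ip_mono {f : ℝ≥0 → ℝ≥0} (hf : Monotone f) : Monotone (Ip f) :=
  fun _ _ h => add_le_add h (hf h)

lemma inv_strictMono {ρ ρi : ℝ≥0 → ℝ≥0} (hm : StrictMono ρ)
    (hri : ∀ x, ρ (ρi x) = x) : StrictMono ρi := by
  intro x y h
  have : ρ (ρi x) < ρ (ρi y) := by rw [hri, hri]; exact h
  exact hm.lt_iff_lt.mp this

lemma split {ρ ρi : ℝ≥0 → ℝ≥0} (hm : StrictMono ρ) (hri : ∀ x, ρ (ρi x) = x)
    (a b : ℝ≥0) : a + b ≤ max (Ip ρ a) (Ip ρi b) := by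
  rcases le_or_gt b (ρ a) with h | h
  · exact le_max_of_le_left (add_le_add_right h a)
  · have ha : a < ρi b := by
      rw [← hri b] at h
      exact hm.lt_iff_lt.mp h
    refine le_max_of_le_right ?_
    calc a + b ≤ ρi b + b := add_le_add ha.le le_rfl
    _ = b + ρi b := add_comm _ _

lemma absorb {ρ ρi : ℝ≥0 → ℝ≥0} (hm : StrictMono ρ) (hri : ∀ x, ρ (ρi x) = x)
    {x a v s_l : ℝ≥0} (hx : x ≤ a + v) (hsg : s_l ≤ x → Ip ρ v ≤ x) :
    x ≤ max s_l (Ip ρi a) := by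
  by_contra hc
  rw [not_le, max_lt_iff] at hc
  obtain ⟨h1, h2⟩ := hc
  have hv : v + ρ v ≤ x := hsg h1.le
  have h3 : v + ρ v ≤ v + a := by
    calc v + ρ v ≤ x := hv
    _ ≤ a + v := hx
    _ = v + a := add_comm _ _
  have hρv : ρ v ≤ a := le_of_add_le_add_left h3
  have hva : v ≤ ρi a := by
    have : ρ v ≤ ρ (ρi a) := by rw [hri]; exact hρv
    exact hm.le_iff_le.mp this
  exact absurd (hx.trans (add_le_add le_rfl hva)) (not_le.mpr h2)

/-- Core scalar small-gain bound. -/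
lemma scalar {γ₁y γ₂y ρ₁ ρ₂ ρ₁inv ρ₂inv : ℝ≥0 → ℝ≥0} {s_l : ℝ≥0}
    (hγ₁m : Monotone γ₁y)
    (hρ₁m : StrictMono ρ₁) (hρ₂m : StrictMono ρ₂)
    (hρ₁r : ∀ x, ρ₁ (ρ₁inv x) = x) (hρ₂r : ∀ x, ρ₂ (ρ₂inv x) = x)
    (hρ₁invm : Monotone ρ₁inv)
    (hsg₂ : ∀ s, s_l ≤ s → Ip ρ₁ (γ₁y (Ip ρ₂ (γ₂y s))) ≤ s)
    {a b C₁ C₂ : ℝ≥0} (ha : a ≤ C₁ + γ₁y b) (hb : b ≤ C₂ + γ₂y a) :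
    a ≤ max s_l (Ip ρ₁inv (C₁ + γ₁y (Ip ρ₂inv C₂))) := by
  have hb' : b ≤ max (Ip ρ₂ (γ₂y a)) (Ip ρ₂inv C₂) := by
    calc b ≤ C₂ + γ₂y a := hb
    _ = γ₂y a + C₂ := add_comm _ _
    _ ≤ _ := split hρ₂m hρ₂r _ _
  rcases le_max_iff.mp hb' with h | h
  · have ha' : a ≤ C₁ + γ₁y (Ip ρ₂ (γ₂y a)) :=
      ha.trans (add_le_add le_rfl (hγ₁m h))
    have habs : a ≤ max s_l (Ip ρ₁inv C₁) :=
      absorb hρ₁m hρ₁r ha' (fun hs => hsg₂ a hs)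
    exact habs.trans (max_le_max le_rfl (ip_mono hρ₁invm le_self_add))
  · have h1 : a ≤ C₁ + γ₁y (Ip ρ₂inv C₂) :=
      ha.trans (add_le_add le_rfl (hγ₁m h))
    exact h1.trans ((le_ip ρ₁inv _).trans (le_max_right _ _))

/-- Master bound with the u-part separated and ρ₃ splitting. -/
lemma master {γ₁y γ₂y ρ₁ ρ₂ ρ₃ ρ₁inv ρ₂inv ρ₃inv : ℝ≥0 → ℝ≥0} {s_l : ℝ≥0}
    (hγ₁m : Monotone γ₁y)
    (hρ₁m : StrictMono ρ₁) (hρ₂m : StrictMono ρ₂) (hρ₃m : StrictMono ρ₃)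
    (hρ₁r : ∀ x, ρ₁ (ρ₁inv x) = x) (hρ₂r : ∀ x, ρ₂ (ρ₂inv x) = x)
    (hρ₃l : ∀ x, ρ₃inv (ρ₃ x) = x) (hρ₃r : ∀ x, ρ₃ (ρ₃inv x) = x)
    (hsg₂ : ∀ s, s_l ≤ s → Ip ρ₁ (γ₁y (Ip ρ₂ (γ₂y s))) ≤ s)
    {a b Cx₁ Cx₂ Cu₁ Cu₂ : ℝ≥0}
    (ha : a ≤ (Cx₁ + Cu₁) + γ₁y b) (hb : b ≤ (Cx₂ + Cu₂) + γ₂y a) :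
    a ≤ Ip ρ₁inv (Ip ρ₃inv (Cx₁ + γ₁y (Ip ρ₂inv (Ip ρ₃inv Cx₂))))
        + Ip ρ₁inv (Ip ρ₃ (Ip ρ₃ (Cu₁ + γ₁y (Ip ρ₂inv (Ip ρ₃ (Ip ρ₃ Cu₂))))))
        + s_l := by
  have hρ₁invm : Monotone ρ₁inv := (inv_strictMono hρ₁m hρ₁r).monotone
  have hρ₂invm : Monotone ρ₂inv := (inv_strictMono hρ₂m hρ₂r).monotone
  have hρ₃invm : StrictMono ρ₃inv := inv_strictMono hρ₃m hρ₃r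
  set Xbr := Ip ρ₁inv (Ip ρ₃inv (Cx₁ + γ₁y (Ip ρ₂inv (Ip ρ₃inv Cx₂)))) with hXbr
  set Ubr := Ip ρ₁inv (Ip ρ₃ (Ip ρ₃ (Cu₁ + γ₁y (Ip ρ₂inv (Ip ρ₃ (Ip ρ₃ Cu₂)))))) with hUbr
  have key : a ≤ max s_l (max Xbr Ubr) := by
    have hmain : a ≤ max s_l (Ip ρ₁inv ((Cx₁ + Cu₁) + γ₁y (Ip ρ₂inv (Cx₂ + Cu₂)))) :=
      scalar hγ₁m hρ₁m hρ₂m hρ₁r hρ₂r hρ₁invm hsg₂ ha hb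
    rcases le_max_iff.mp hmain with h | h
    · exact h.trans (le_max_left _ _)
    · refine le_max_of_le_right ?_
      have h2 : Cx₂ + Cu₂ ≤ max (Ip ρ₃inv Cx₂) (Ip ρ₃ Cu₂) :=
        split hρ₃invm hρ₃l _ _
      rcases le_max_iff.mp h2 with hc | hc
      · -- case A : the X-part of C₂ dominates
        set w := γ₁y (Ip ρ₂inv (Ip ρ₃inv Cx₂)) with hw
        have hg : γ₁y (Ip ρ₂inv (Cx₂ + Cu₂)) ≤ w := hγ₁m (ip_mono hρ₂invm hc)
        have h3 : (Cx₁ + Cu₁) + γ₁y (Ip ρ₂inv (Cx₂ + Cu₂)) ≤ (Cx₁ + w) + Cu₁ := by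
          calc (Cx₁ + Cu₁) + γ₁y (Ip ρ₂inv (Cx₂ + Cu₂))
              ≤ (Cx₁ + Cu₁) + w := add_le_add le_rfl hg
          _ = (Cx₁ + w) + Cu₁ := by ring
        have h4 : (Cx₁ + w) + Cu₁ ≤ max (Ip ρ₃inv (Cx₁ + w)) (Ip ρ₃ Cu₁) :=
          split hρ₃invm hρ₃l _ _
        have h5 : a ≤ Ip ρ₁inv (max (Ip ρ₃inv (Cx₁ + w)) (Ip ρ₃ Cu₁)) :=
          h.trans (ip_mono hρ₁invm (h3.trans h4))
        rcases le_total (Ip ρ₃inv (Cx₁ + w)) (Ip ρ₃ Cu₁) with hm' | hm'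
        · rw [max_eq_right hm'] at h5
          refine le_max_of_le_right (h5.trans (ip_mono hρ₁invm ?_))
          refine ip_mono hρ₃m.monotone ?_
          exact (le_self_add.trans (le_ip ρ₃ _))
        · rw [max_eq_left hm'] at h5
          exact le_max_of_le_left h5
      · -- case B : the u-part of C₂ dominates
        set g := γ₁y (Ip ρ₂inv (Ip ρ₃ (Ip ρ₃ Cu₂))) with hgdef
        have hg : γ₁y (Ip ρ₂inv (Cx₂ + Cu₂)) ≤ g :=
          hγ₁m (ip_mono hρ₂invm (hc.trans (le_ip ρ₃ _)))
        have h3 : (Cx₁ + Cu₁) + γ₁y (Ip ρ₂inv (Cx₂ + Cu₂)) ≤ Cx₁ + (Cu₁ + g) := by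
          calc (Cx₁ + Cu₁) + γ₁y (Ip ρ₂inv (Cx₂ + Cu₂))
              ≤ (Cx₁ + Cu₁) + g := add_le_add le_rfl hg
          _ = Cx₁ + (Cu₁ + g) := by ring
        have h4 : Cx₁ + (Cu₁ + g) ≤ max (Ip ρ₃inv Cx₁) (Ip ρ₃ (Cu₁ + g)) :=
          split hρ₃invm hρ₃l _ _
        have h5 : a ≤ Ip ρ₁inv (max (Ip ρ₃inv Cx₁) (Ip ρ₃ (Cu₁ + g))) :=
          h.trans (ip_mono hρ₁invm (h3.trans h4))
        rcases le_total (Ip ρ₃inv Cx₁) (Ip ρ₃ (Cu₁ + g)) with hm' | hm'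
        · rw [max_eq_right hm'] at h5
          exact le_max_of_le_right (h5.trans (ip_mono hρ₁invm (le_ip ρ₃ _)))
        · rw [max_eq_left hm'] at h5
          refine le_max_of_le_left (h5.trans (ip_mono hρ₁invm ?_))
          exact ip_mono hρ₃invm.monotone le_self_add
  -- max ≤ sum
  refine key.trans (max_le le_add_self (le_self_add.trans' (max_le le_self_add le_add_self)))

end SGAux

open SGAux in
/-- Practical-stability part of the generalized small-gain theorem (trajectory
form).  Here `ρᵢinv` denotes the inverse bijection of the class-K∞ function
`ρᵢ`, and the gains are
`r₁(s) = (Id+ρ₁⁻¹)((Id+ρ₃)²(γ₁ᵘ(s) + γ₁ʸ((Id+ρ₂⁻¹)((Id+ρ₃)²(γ₂ᵘ(s))))))`,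
`r₂(s) = (Id+ρ₂⁻¹)((Id+ρ₃)²(γ₂ᵘ(s) + γ₂ʸ((Id+ρ₁⁻¹)((Id+ρ₃)²(γ₁ᵘ(s))))))`.
The functions `δ₁, δ₂` of `(X₁, X₂)` are of class-K type: continuous, monotone
and vanishing at the origin.  The existential quantifiers over `d₃, δ₁, δ₂,
d̃₁, d̃₂` come before the quantifier over the trajectories, so the bounds are
uniform over all trajectories and all `X₁, X₂, U₁, U₂`. -/
theorem small_gain_practical_stability_trajectory
    (β₁ β₂ : ℝ≥0 → ℝ≥0 → ℝ≥0)
    (γ₁y γ₂y γ₁u γ₂u : ℝ≥0 → ℝ≥0)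
    (ρ₁ ρ₂ ρ₃ ρ₁inv ρ₂inv : ℝ≥0 → ℝ≥0)
    (d₁ d₂ s_l : ℝ≥0)
    (hβ₁ : ClassKL β₁) (hβ₂ : ClassKL β₂)
    (hγ₁y : ClassK γ₁y) (hγ₂y : ClassK γ₂y)
    (hγ₁u : ClassK γ₁u) (hγ₂u : ClassK γ₂u)
    (hρ₁ : ClassKInf ρ₁) (hρ₂ : ClassKInf ρ₂) (hρ₃ : ClassKInf ρ₃)
    (hρ₁invl : Function.LeftInverse ρ₁inv ρ₁)
    (hρ₁invr : Function.RightInverse ρ₁inv ρ₁)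
    (hρ₂invl : Function.LeftInverse ρ₂inv ρ₂)
    (hρ₂invr : Function.RightInverse ρ₂inv ρ₂)
    (hsg₁ : ∀ s : ℝ≥0, s_l ≤ s → Ip ρ₂ (γ₂y (Ip ρ₁ (γ₁y s))) ≤ s)
    (hsg₂ : ∀ s : ℝ≥0, s_l ≤ s → Ip ρ₁ (γ₁y (Ip ρ₂ (γ₂y s))) ≤ s) :
    ∃ d₃ : ℝ≥0, (s_l = 0 → d₃ = 0) ∧
    ∃ δ₁ δ₂ : ℝ≥0 → ℝ≥0 → ℝ≥0, ∃ dtilde₁ dtilde₂ : ℝ≥0,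
      Continuous (fun p : ℝ≥0 × ℝ≥0 => δ₁ p.1 p.2) ∧
      Continuous (fun p : ℝ≥0 × ℝ≥0 => δ₂ p.1 p.2) ∧
      Monotone (fun p : ℝ≥0 × ℝ≥0 => δ₁ p.1 p.2) ∧
      Monotone (fun p : ℝ≥0 × ℝ≥0 => δ₂ p.1 p.2) ∧
      δ₁ 0 0 = 0 ∧ δ₂ 0 0 = 0 ∧
      (d₁ = 0 ∧ d₂ = 0 ∧ s_l = 0 → dtilde₁ = 0 ∧ dtilde₂ = 0) ∧
      ∀ (T : ℝ≥0∞), 0 < T →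
      ∀ (X₁ X₂ U₁ U₂ : ℝ≥0) (y₁ y₂ : ℝ≥0 → ℝ≥0),
        (∀ t : ℝ≥0, (t : ℝ≥0∞) < T →
          BddAbove (y₁ '' Set.Icc 0 t) ∧ BddAbove (y₂ '' Set.Icc 0 t)) →
        (∀ t : ℝ≥0, (t : ℝ≥0∞) < T →
          y₁ t ≤ β₁ X₁ 0 + γ₁y (sSup (y₂ '' Set.Icc 0 t)) + γ₁u U₁ + d₁) →
        (∀ t : ℝ≥0, (t : ℝ≥0∞) < T →
          y₂ t ≤ β₂ X₂ 0 + γ₂y (sSup (y₁ '' Set.Icc 0 t)) + γ₂u U₂ + d₂) →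
        ∀ t : ℝ≥0, (t : ℝ≥0∞) < T →
          y₁ t ≤ δ₁ X₁ X₂ +
              Ip ρ₁inv (Ip ρ₃ (Ip ρ₃ (γ₁u (U₁ + U₂) +
                γ₁y (Ip ρ₂inv (Ip ρ₃ (Ip ρ₃ (γ₂u (U₁ + U₂)))))))) + dtilde₁ ∧
          y₂ t ≤ δ₂ X₁ X₂ +
              Ip ρ₂inv (Ip ρ₃ (Ip ρ₃ (γ₂u (U₁ + U₂) +
                γ₂y (Ip ρ₁inv (Ip ρ₃ (Ip ρ₃ (γ₁u (U₁ + U₂)))))))) + dtilde₂ := by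

  classical
  -- basic facts about the given functions
  have hγ₁ym : Monotone γ₁y := hγ₁y.2.1.monotone
  have hγ₂ym : Monotone γ₂y := hγ₂y.2.1.monotone
  have hγ₁um : Monotone γ₁u := hγ₁u.2.1.monotone
  have hγ₂um : Monotone γ₂u := hγ₂u.2.1.monotone
  have hρ₁m : StrictMono ρ₁ := hρ₁.1.2.1
  have hρ₂m : StrictMono ρ₂ := hρ₂.1.2.1
  have hρ₃m : StrictMono ρ₃ := hρ₃.1.2.1
  -- continuity of inverse functions
  have hcinv : ∀ (ρ ρi : ℝ≥0 → ℝ≥0), StrictMono ρ → (∀ x, ρ (ρi x) = x) →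
      Continuous ρi := by
    intro ρ ρi hm hri
    have hsurj : Function.Surjective ρ := fun y => ⟨ρi y, hri y⟩
    have hcoe : ⇑(StrictMono.orderIsoOfSurjective ρ hm hsurj) = ρ :=
      StrictMono.coe_orderIsoOfSurjective ρ hm hsurj
    have heq : ρi = ⇑(StrictMono.orderIsoOfSurjective ρ hm hsurj).symm := by
      funext x
      apply hm.injective
      rw [hri]
      exact ((congrFun hcoe _).symm.trans
        ((StrictMono.orderIsoOfSurjective ρ hm hsurj).apply_symm_apply x)).symm
    rw [heq]
    exact OrderIso.continuous _
  -- construct the inverse of ρ₃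
  have h3surj : Function.Surjective ρ₃ := by
    intro y
    obtain ⟨M, hM⟩ := (Filter.tendsto_atTop.mp hρ₃.2 y).exists
    have hy : y ∈ Set.Icc (ρ₃ 0) (ρ₃ M) := ⟨by rw [hρ₃.1.2.2]; exact zero_le, hM⟩
    obtain ⟨x, _, hx⟩ := intermediate_value_Icc (zero_le : (0:ℝ≥0) ≤ M) hρ₃.1.1.continuousOn hy
    exact ⟨x, hx⟩
  set e₃ := StrictMono.orderIsoOfSurjective ρ₃ hρ₃m h3surj with he₃
  have hcoe₃ : ⇑e₃ = ρ₃ := StrictMono.coe_orderIsoOfSurjective ρ₃ hρ₃m h3surj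
  set ρ₃inv : ℝ≥0 → ℝ≥0 := ⇑e₃.symm with hρ₃invdef
  have hρ₃invr : ∀ x, ρ₃ (ρ₃inv x) = x := by
    intro x; rw [hρ₃invdef, ← hcoe₃]; exact e₃.apply_symm_apply x
  have hρ₃invl : ∀ x, ρ₃inv (ρ₃ x) = x := by
    intro x; rw [hρ₃invdef, ← hcoe₃]; exact e₃.symm_apply_apply x
  have hρ₃invc : Continuous ρ₃inv := OrderIso.continuous _
  have hρ₃invm : StrictMono ρ₃inv := inv_strictMono hρ₃m hρ₃invr
  -- monotonicity and continuity of the inverses of ρ₁, ρ₂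
  have hρ₁invm : Monotone ρ₁inv := (inv_strictMono hρ₁m hρ₁invr).monotone
  have hρ₂invm : Monotone ρ₂inv := (inv_strictMono hρ₂m hρ₂invr).monotone
  have hρ₁invc : Continuous ρ₁inv := hcinv ρ₁ ρ₁inv hρ₁m hρ₁invr
  have hρ₂invc : Continuous ρ₂inv := hcinv ρ₂ ρ₂inv hρ₂m hρ₂invr
  -- values at zero
  have hρ₁inv0 : ρ₁inv 0 = 0 := by
    apply hρ₁m.injective; rw [hρ₁invr 0, hρ₁.1.2.2]
  have hρ₂inv0 : ρ₂inv 0 = 0 := by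
    apply hρ₂m.injective; rw [hρ₂invr 0, hρ₂.1.2.2]
  have hρ₃inv0 : ρ₃inv 0 = 0 := by
    apply hρ₃m.injective; rw [hρ₃invr 0, hρ₃.1.2.2]
  -- the class-K-type envelope functions
  set Ψ₁ : ℝ≥0 → ℝ≥0 :=
    fun x => Ip ρ₁inv (Ip ρ₃inv (x + γ₁y (Ip ρ₂inv (Ip ρ₃inv x)))) with hΨ₁def
  set Ψ₂ : ℝ≥0 → ℝ≥0 :=
    fun x => Ip ρ₂inv (Ip ρ₃inv (x + γ₂y (Ip ρ₁inv (Ip ρ₃inv x)))) with hΨ₂def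
  have hipc : ∀ {f : ℝ≥0 → ℝ≥0}, Continuous f → Continuous (Ip f) :=
    fun hf => continuous_id.add hf
  have hΨ₁c : Continuous Ψ₁ := by
    apply (hipc hρ₁invc).comp
    apply (hipc hρ₃invc).comp
    exact continuous_id.add (hγ₁y.1.comp ((hipc hρ₂invc).comp (hipc hρ₃invc)))
  have hΨ₂c : Continuous Ψ₂ := by
    apply (hipc hρ₂invc).comp
    apply (hipc hρ₃invc).comp
    exact continuous_id.add (hγ₂y.1.comp ((hipc hρ₁invc).comp (hipc hρ₃invc)))
  have hΨ₁m : Monotone Ψ₁ := fun x y h =>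
    ip_mono hρ₁invm (ip_mono hρ₃invm.monotone (add_le_add h
      (hγ₁ym (ip_mono hρ₂invm (ip_mono hρ₃invm.monotone h)))))
  have hΨ₂m : Monotone Ψ₂ := fun x y h =>
    ip_mono hρ₂invm (ip_mono hρ₃invm.monotone (add_le_add h
      (hγ₂ym (ip_mono hρ₁invm (ip_mono hρ₃invm.monotone h)))))
  have hΨ₁0 : Ψ₁ 0 = 0 := by
    simp [hΨ₁def, Ip, hρ₃inv0, hρ₂inv0, hρ₁inv0, hγ₁y.2.2]
  have hΨ₂0 : Ψ₂ 0 = 0 := by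
    simp [hΨ₂def, Ip, hρ₃inv0, hρ₂inv0, hρ₁inv0, hγ₂y.2.2]
  have hβ₁0 : β₁ 0 0 = 0 := (hβ₁.1 0).2.2
  have hβ₂0 : β₂ 0 0 = 0 := (hβ₂.1 0).2.2
  refine ⟨s_l, fun h => h,
    (fun X₁ X₂ => Ψ₁ (2 * β₁ X₁ 0 + 2 * β₂ X₂ 0)),
    (fun X₁ X₂ => Ψ₂ (2 * β₁ X₁ 0 + 2 * β₂ X₂ 0)),
    Ψ₁ (2 * d₁ + 2 * d₂) + s_l, Ψ₂ (2 * d₁ + 2 * d₂) + s_l,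
    ?_, ?_, ?_, ?_, ?_, ?_, ?_, ?_⟩
  · exact hΨ₁c.comp ((continuous_const.mul ((hβ₁.1 0).1.comp continuous_fst)).add
      (continuous_const.mul ((hβ₂.1 0).1.comp continuous_snd)))
  · exact hΨ₂c.comp ((continuous_const.mul ((hβ₁.1 0).1.comp continuous_fst)).add
      (continuous_const.mul ((hβ₂.1 0).1.comp continuous_snd)))
  · exact fun p q h => hΨ₁m (add_le_add
      (mul_le_mul' le_rfl ((hβ₁.1 0).2.1.monotone h.1))
      (mul_le_mul' le_rfl ((hβ₂.1 0).2.1.monotone h.2)))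
  · exact fun p q h => hΨ₂m (add_le_add
      (mul_le_mul' le_rfl ((hβ₁.1 0).2.1.monotone h.1))
      (mul_le_mul' le_rfl ((hβ₂.1 0).2.1.monotone h.2)))
  · show Ψ₁ (2 * β₁ 0 0 + 2 * β₂ 0 0) = 0
    rw [hβ₁0, hβ₂0]; simpa using hΨ₁0
  · show Ψ₂ (2 * β₁ 0 0 + 2 * β₂ 0 0) = 0
    rw [hβ₁0, hβ₂0]; simpa using hΨ₂0
  · rintro ⟨h1, h2, h3⟩
    rw [h1, h2, h3]
    constructor <;> simp [hΨ₁0, hΨ₂0]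
  · -- the trajectory bound
    intro T hT X₁ X₂ U₁ U₂ y₁ y₂ hbdd hy₁ hy₂ t ht
    set u : ℝ≥0 := U₁ + U₂ with hu
    set B₁ : ℝ≥0 := β₁ X₁ 0 with hB₁
    set B₂ : ℝ≥0 := β₂ X₂ 0 with hB₂
    set a : ℝ≥0 := sSup (y₁ '' Set.Icc 0 t) with ha
    set b : ℝ≥0 := sSup (y₂ '' Set.Icc 0 t) with hb
    have hane : (y₁ '' Set.Icc 0 t).Nonempty :=
      ⟨y₁ 0, Set.mem_image_of_mem _ (Set.left_mem_Icc.mpr (zero_le : (0:ℝ≥0) ≤ t))⟩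
    have hbne : (y₂ '' Set.Icc 0 t).Nonempty :=
      ⟨y₂ 0, Set.mem_image_of_mem _ (Set.left_mem_Icc.mpr (zero_le : (0:ℝ≥0) ≤ t))⟩
    have hA : a ≤ ((B₁ + d₁) + γ₁u u) + γ₁y b := by
      refine csSup_le hane ?_
      rintro v ⟨s, hs, rfl⟩
      have hsT : (s : ℝ≥0∞) < T := lt_of_le_of_lt (ENNReal.coe_le_coe.mpr hs.2) ht
      have h2 : sSup (y₂ '' Set.Icc 0 s) ≤ b :=
        csSup_le_csSup (hbdd t ht).2
          ⟨y₂ 0, Set.mem_image_of_mem _ (Set.left_mem_Icc.mpr (zero_le : (0:ℝ≥0) ≤ s))⟩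
          (Set.image_mono (Set.Icc_subset_Icc le_rfl hs.2))
      calc y₁ s ≤ β₁ X₁ 0 + γ₁y (sSup (y₂ '' Set.Icc 0 s)) + γ₁u U₁ + d₁ :=
            hy₁ s hsT
      _ ≤ B₁ + γ₁y b + γ₁u u + d₁ :=
            add_le_add (add_le_add (add_le_add le_rfl (hγ₁ym h2))
              (hγ₁um le_self_add)) le_rfl
      _ = ((B₁ + d₁) + γ₁u u) + γ₁y b := by ring
    have hB : b ≤ ((B₂ + d₂) + γ₂u u) + γ₂y a := by
      refine csSup_le hbne ?_
      rintro v ⟨s, hs, rfl⟩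
      have hsT : (s : ℝ≥0∞) < T := lt_of_le_of_lt (ENNReal.coe_le_coe.mpr hs.2) ht
      have h2 : sSup (y₁ '' Set.Icc 0 s) ≤ a :=
        csSup_le_csSup (hbdd t ht).1
          ⟨y₁ 0, Set.mem_image_of_mem _ (Set.left_mem_Icc.mpr (zero_le : (0:ℝ≥0) ≤ s))⟩
          (Set.image_mono (Set.Icc_subset_Icc le_rfl hs.2))
      calc y₂ s ≤ β₂ X₂ 0 + γ₂y (sSup (y₁ '' Set.Icc 0 s)) + γ₂u U₂ + d₂ :=
            hy₂ s hsT
      _ ≤ B₂ + γ₂y a + γ₂u u + d₂ :=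
            add_le_add (add_le_add (add_le_add le_rfl (hγ₂ym h2))
              (hγ₂um le_add_self)) le_rfl
      _ = ((B₂ + d₂) + γ₂u u) + γ₂y a := by ring
    have hmaster₁ :=
      master hγ₁ym hρ₁m hρ₂m hρ₃m hρ₁invr hρ₂invr hρ₃invl hρ₃invr hsg₂ hA hB
    have hmaster₂ :=
      master hγ₂ym hρ₂m hρ₁m hρ₃m hρ₂invr hρ₁invr hρ₃invl hρ₃invr hsg₁ hB hA
    -- bound the X-branch by the envelope functions
    set m : ℝ≥0 := 2 * B₁ + 2 * B₂ with hm
    set n : ℝ≥0 := 2 * d₁ + 2 * d₂ with hn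
    have hx1 : B₁ + d₁ ≤ max m n := by
      rcases le_total (B₁ + B₂) (d₁ + d₂) with h | h
      · refine le_max_of_le_right ?_
        calc B₁ + d₁ ≤ (d₁ + d₂) + (d₁ + d₂) :=
              add_le_add (le_self_add.trans h) le_self_add
        _ = n := by rw [hn]; ring
      · refine le_max_of_le_left ?_
        calc B₁ + d₁ ≤ (B₁ + B₂) + (B₁ + B₂) :=
              add_le_add le_self_add (le_self_add.trans h)
        _ = m := by rw [hm]; ring
    have hx2 : B₂ + d₂ ≤ max m n := by
      rcases le_total (B₁ + B₂) (d₁ + d₂) with h | h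
      · refine le_max_of_le_right ?_
        calc B₂ + d₂ ≤ (d₁ + d₂) + (d₁ + d₂) :=
              add_le_add (le_add_self.trans h) le_add_self
        _ = n := by rw [hn]; ring
      · refine le_max_of_le_left ?_
        calc B₂ + d₂ ≤ (B₁ + B₂) + (B₁ + B₂) :=
              add_le_add le_add_self (le_add_self.trans h)
        _ = m := by rw [hm]; ring
    have hXbr₁ : Ip ρ₁inv (Ip ρ₃inv ((B₁ + d₁) + γ₁y (Ip ρ₂inv (Ip ρ₃inv (B₂ + d₂)))))
        ≤ Ψ₁ m + Ψ₁ n := by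
      have h1 : Ip ρ₁inv (Ip ρ₃inv ((B₁ + d₁) + γ₁y (Ip ρ₂inv (Ip ρ₃inv (B₂ + d₂)))))
          ≤ Ψ₁ (max m n) :=
        ip_mono hρ₁invm (ip_mono hρ₃invm.monotone (add_le_add hx1
          (hγ₁ym (ip_mono hρ₂invm (ip_mono hρ₃invm.monotone hx2)))))
      rw [hΨ₁m.map_max] at h1
      exact h1.trans (max_le le_self_add le_add_self)
    have hXbr₂ : Ip ρ₂inv (Ip ρ₃inv ((B₂ + d₂) + γ₂y (Ip ρ₁inv (Ip ρ₃inv (B₁ + d₁)))))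
        ≤ Ψ₂ m + Ψ₂ n := by
      have h1 : Ip ρ₂inv (Ip ρ₃inv ((B₂ + d₂) + γ₂y (Ip ρ₁inv (Ip ρ₃inv (B₁ + d₁)))))
          ≤ Ψ₂ (max m n) :=
        ip_mono hρ₂invm (ip_mono hρ₃invm.monotone (add_le_add hx2
          (hγ₂ym (ip_mono hρ₁invm (ip_mono hρ₃invm.monotone hx1)))))
      rw [hΨ₂m.map_max] at h1
      exact h1.trans (max_le le_self_add le_add_self)
    have hy₁a : y₁ t ≤ a :=
      le_csSup (hbdd t ht).1 (Set.mem_image_of_mem _ (Set.right_mem_Icc.mpr (zero_le : (0:ℝ≥0) ≤ t)))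
    have hy₂b : y₂ t ≤ b :=
      le_csSup (hbdd t ht).2 (Set.mem_image_of_mem _ (Set.right_mem_Icc.mpr (zero_le : (0:ℝ≥0) ≤ t)))
    constructor
    · calc y₁ t ≤ a := hy₁a
      _ ≤ Ip ρ₁inv (Ip ρ₃inv ((B₁ + d₁) + γ₁y (Ip ρ₂inv (Ip ρ₃inv (B₂ + d₂)))))
            + Ip ρ₁inv (Ip ρ₃ (Ip ρ₃ (γ₁u u + γ₁y (Ip ρ₂inv (Ip ρ₃ (Ip ρ₃ (γ₂u u)))))))
            + s_l := hmaster₁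
      _ ≤ (Ψ₁ m + Ψ₁ n)
            + Ip ρ₁inv (Ip ρ₃ (Ip ρ₃ (γ₁u u + γ₁y (Ip ρ₂inv (Ip ρ₃ (Ip ρ₃ (γ₂u u)))))))
            + s_l := add_le_add (add_le_add hXbr₁ le_rfl) le_rfl
      _ = Ψ₁ m
            + Ip ρ₁inv (Ip ρ₃ (Ip ρ₃ (γ₁u u + γ₁y (Ip ρ₂inv (Ip ρ₃ (Ip ρ₃ (γ₂u u)))))))
            + (Ψ₁ n + s_l) := by ring
    · calc y₂ t ≤ b := hy₂b
      _ ≤ Ip ρ₂inv (Ip ρ₃inv ((B₂ + d₂) + γ₂y (Ip ρ₁inv (Ip ρ₃inv (B₁ + d₁)))))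
            + Ip ρ₂inv (Ip ρ₃ (Ip ρ₃ (γ₂u u + γ₂y (Ip ρ₁inv (Ip ρ₃ (Ip ρ₃ (γ₁u u)))))))
            + s_l := hmaster₂
      _ ≤ (Ψ₂ m + Ψ₂ n)
            + Ip ρ₂inv (Ip ρ₃ (Ip ρ₃ (γ₂u u + γ₂y (Ip ρ₁inv (Ip ρ₃ (Ip ρ₃ (γ₁u u)))))))
            + s_l := add_le_add (add_le_add hXbr₂ le_rfl) le_rfl
      _ = Ψ₂ m
            + Ip ρ₂inv (Ip ρ₃ (Ip ρ₃ (γ₂u u + γ₂y (Ip ρ₁inv (Ip ρ₃ (Ip ρ₃ (γ₁u u)))))))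
            + (Ψ₂ n + s_l) := by ring
end
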